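/- arXiv:2510.19744 — 8 statements merged into one kernel-verified Lean document; each statement's English description precedes it below -/
import Mathlib

section
/- Let A be a Boolean algebra, A an element of A, and (μ_n) a sequence of bounded finitely additive signed measures on A such that sup_n ‖μ_n ↾ A‖ = ∞ (where (μ ↾ A)(B) = μ(A ∧ B) and ‖·‖ is the total variation norm). Then there exists an ultrafilter t on A containing A such that for every B ∈ t one has sup_n ‖μ_n ↾ B‖ = ∞. -/
/-! The map `B ↦ sup_n ‖μ_n ↾ B‖` is monotone and subadditive, so the elements on which it is
finite form an order ideal not containing `A`. The Boolean prime ideal theorem (compactness of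
the Stone space) separates the principal filter of `A` from this ideal by an ultrafilter. -/

open Filter
open scoped ENNReal

variable {α : Type*}

/-- Finite additivity of a real-valued set function on a Boolean algebra. -/
def FinAdd [BooleanAlgebra α] (μ : α → ℝ) : Prop :=
  ∀ a b : α, a ⊓ b = ⊥ → μ (a ⊔ b) = μ a + μ b

/-- The variation of `μ` over the subfamily `s`:
`sup {|μ a| + |μ b| : a, b ∈ s, a ⊓ b = ⊥}`, computed in `ℝ≥0∞`. -/
noncomputable def svar [BooleanAlgebra α] (μ : α → ℝ) (s : Set α) : ℝ≥0∞ :=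
  ⨆ p : {p : α × α // p.1 ∈ s ∧ p.2 ∈ s ∧ p.1 ⊓ p.2 = ⊥},
    ENNReal.ofReal (|μ p.1.1| + |μ p.1.2|)

/-- The variation norm of the restriction `μ ↾ a`, i.e. `|μ|(a)`. -/
noncomputable def bvar [BooleanAlgebra α] (μ : α → ℝ) (a : α) : ℝ≥0∞ :=
  svar μ (Set.Iic a)

/-- `t` is an ultrafilter on the Boolean algebra `α`. -/
structure IsUltrafilterSet [BooleanAlgebra α] (t : Set α) : Prop where
  top_mem : ⊤ ∈ t
  bot_not_mem : ⊥ ∉ t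
  mem_of_le : ∀ ⦃a b : α⦄, a ∈ t → a ≤ b → b ∈ t
  inf_mem : ∀ ⦃a b : α⦄, a ∈ t → b ∈ t → a ⊓ b ∈ t
  mem_or_compl_mem : ∀ a : α, a ∈ t ∨ aᶜ ∈ t

open Order

section Variation

variable [BooleanAlgebra α] {μ : α → ℝ}

lemma FinAdd.map_bot (h : FinAdd μ) : μ ⊥ = 0 := by
  simpa using h ⊥ ⊥ (bot_inf_eq ⊥)

lemma FinAdd.eq_inf_add_inf_compl (h : FinAdd μ) (x b : α) : μ x = μ (x ⊓ b) + μ (x ⊓ bᶜ) := by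
  conv_lhs => rw [← sup_inf_inf_compl (x := x) (y := b)]
  exact h _ _ (by rw [inf_inf_inf_comm, inf_idem, inf_compl_eq_bot, inf_bot_eq])

lemma ofReal_le_bvar (μ : α → ℝ) {a b c : α} (ha : a ≤ c) (hb : b ≤ c) (hab : a ⊓ b = ⊥) :
    ENNReal.ofReal (|μ a| + |μ b|) ≤ bvar μ c :=
  le_iSup_of_le ⟨(a, b), ha, hb, hab⟩ le_rfl

lemma bvar_mono (μ : α → ℝ) : Monotone (bvar μ) := fun _ _ hab =>
  iSup_le fun p => ofReal_le_bvar μ (p.2.1.trans hab) (p.2.2.1.trans hab) p.2.2.2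

lemma bvar_bot (h : FinAdd μ) : bvar μ ⊥ = 0 := by
  refine le_antisymm (iSup_le fun p => ?_) bot_le
  simp [le_bot_iff.mp p.2.1, le_bot_iff.mp p.2.2.1, h.map_bot]

/-- Split each of the two disjoint witnesses along `b` and `bᶜ`; the pieces below `bᶜ`
lie below `c`. -/
lemma bvar_sup_le (h : FinAdd μ) (b c : α) : bvar μ (b ⊔ c) ≤ bvar μ b + bvar μ c := by
  refine iSup_le fun ⟨⟨x, y⟩, hx, hy, hxy⟩ => ?_
  have below_c : ∀ {z : α}, z ≤ b ⊔ c → z ⊓ bᶜ ≤ c := fun hz =>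
    (inf_le_inf_right _ hz).trans (by simp [inf_sup_right])
  have disj : ∀ d : α, (x ⊓ d) ⊓ (y ⊓ d) = ⊥ := fun d =>
    le_bot_iff.mp ((inf_le_inf inf_le_left inf_le_left).trans hxy.le)
  have hsplit : |μ x| + |μ y| ≤
      (|μ (x ⊓ b)| + |μ (y ⊓ b)|) + (|μ (x ⊓ bᶜ)| + |μ (y ⊓ bᶜ)|) := by
    rw [h.eq_inf_add_inf_compl x b, h.eq_inf_add_inf_compl y b]
    linarith [abs_add_le (μ (x ⊓ b)) (μ (x ⊓ bᶜ)), abs_add_le (μ (y ⊓ b)) (μ (y ⊓ bᶜ))]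
  calc ENNReal.ofReal (|μ x| + |μ y|)
      ≤ ENNReal.ofReal (|μ (x ⊓ b)| + |μ (y ⊓ b)|)
        + ENNReal.ofReal (|μ (x ⊓ bᶜ)| + |μ (y ⊓ bᶜ)|) :=
        (ENNReal.ofReal_le_ofReal hsplit).trans ENNReal.ofReal_add_le
    _ ≤ bvar μ b + bvar μ c :=
        add_le_add (ofReal_le_bvar μ inf_le_right inf_le_right (disj b))
          (ofReal_le_bvar μ (below_c hx) (below_c hy) (disj bᶜ))

end Variation

section Ultrafilter

variable [BooleanAlgebra α]

lemma Order.Ideal.IsPrime.isUltrafilterSet_compl {J : Ideal α} (hJ : J.IsPrime) :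
    IsUltrafilterSet (J : Set α)ᶜ where
  top_mem := hJ.top_notMem
  bot_not_mem h := h J.bot_mem
  mem_of_le _ _ ha hab := J.mem_compl_of_ge hab ha
  inf_mem _ _ ha hb := fun hab => (hJ.mem_or_mem hab).elim ha hb
  mem_or_compl_mem _ := hJ.notMem_or_compl_notMem

/-- The Boolean prime ideal theorem, applied to the principal filter of `a` and the ideal `I`. -/
lemma exists_isUltrafilterSet_disjoint {I : Ideal α} {a : α} (ha : a ∉ I) :
    ∃ t : Set α, IsUltrafilterSet t ∧ a ∈ t ∧ Disjoint t I := by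
  have hdisj : Disjoint (PFilter.principal a : Set α) I :=
    Set.disjoint_left.mpr fun _ hax hx => ha (I.lower hax hx)
  obtain ⟨J, hJ, hIJ, hJa⟩ := DistribLattice.prime_ideal_of_disjoint_filter_ideal hdisj
  exact ⟨(J : Set α)ᶜ, hJ.isUltrafilterSet_compl,
    Set.disjoint_left.mp hJa (PFilter.mem_principal.mpr le_rfl),
    disjoint_compl_left.mono_right hIJ⟩

lemma isIdeal_setOf_ne_top {ν : α → ℝ≥0∞} (hmono : Monotone ν) (hbot : ν ⊥ ≠ ⊤)
    (hsup : ∀ a b, ν (a ⊔ b) ≤ ν a + ν b) : IsIdeal {a | ν a ≠ ⊤} where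
  IsLowerSet _ _ hab ha := ne_top_of_le_ne_top ha (hmono hab)
  Nonempty := ⟨⊥, hbot⟩
  Directed a ha b hb :=
    ⟨a ⊔ b, ne_top_of_le_ne_top (ENNReal.add_ne_top.mpr ⟨ha, hb⟩) (hsup a b),
      le_sup_left, le_sup_right⟩

lemma exists_isUltrafilterSet_forall_eq_top {ν : α → ℝ≥0∞} (hmono : Monotone ν)
    (hbot : ν ⊥ ≠ ⊤) (hsup : ∀ a b, ν (a ⊔ b) ≤ ν a + ν b) {a : α} (ha : ν a = ⊤) :
    ∃ t : Set α, IsUltrafilterSet t ∧ a ∈ t ∧ ∀ b ∈ t, ν b = ⊤ := by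
  obtain ⟨t, ht, hat, hdisj⟩ :=
    exists_isUltrafilterSet_disjoint (I := (isIdeal_setOf_ne_top hmono hbot hsup).toIdeal)
      (not_not.mpr ha)
  exact ⟨t, ht, hat, fun b hb => not_not.mp (Set.disjoint_left.mp hdisj hb)⟩

end Ultrafilter

theorem stmt_0_general [BooleanAlgebra α] (μ : ℕ → α → ℝ)
    (hadd : ∀ n, FinAdd (μ n))
    (A : α) (hA : (⨆ n, bvar (μ n) A) = ⊤) :
    ∃ t : Set α, IsUltrafilterSet t ∧ A ∈ t ∧
      ∀ B ∈ t, (⨆ n, bvar (μ n) B) = ⊤ := by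
  refine exists_isUltrafilterSet_forall_eq_top (ν := fun B => ⨆ n, bvar (μ n) B)
    (fun _ _ hab => iSup_mono fun n => bvar_mono _ hab)
    (by simp [bvar_bot (hadd _)]) (fun b c => iSup_le fun n => ?_) hA
  exact (bvar_sup_le (hadd n) b c).trans
    (add_le_add (le_iSup (fun n => bvar (μ n) b) n) (le_iSup (fun n => bvar (μ n) c) n))

/-- If `sup_n ‖μ_n ↾ A‖ = ∞`, then there is an ultrafilter `t` containing `A` such that
`sup_n ‖μ_n ↾ B‖ = ∞` for every `B ∈ t`. -/
theorem stmt_0 [BooleanAlgebra α] (μ : ℕ → α → ℝ)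
    (hadd : ∀ n, FinAdd (μ n)) (hbdd : ∀ n, bvar (μ n) ⊤ ≠ ⊤)
    (A : α) (hA : (⨆ n, bvar (μ n) A) = ⊤) :
    ∃ t : Set α, IsUltrafilterSet t ∧ A ∈ t ∧
      ∀ B ∈ t, (⨆ n, bvar (μ n) B) = ⊤ :=
  stmt_0_general μ hadd A hA
end

section
/- Let φ be a lower semicontinuous submeasure on ω with φ(ω) = ∞. Then there exists a lower semicontinuous submeasure ψ on ω with ψ(ω) = ∞ such that Fin(φ) ⊆ Exh(ψ), where Fin(φ) = {A ⊆ ω : φ(A) < ∞} and Exh(ψ) = {A ⊆ ω : lim_n ψ(A \ [0,n]) = 0}. -/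
open Filter
open scoped ENNReal

/-- `φ` is a submeasure on `ω`: vanishes on `∅`, finite on singletons, monotone,
and subadditive. -/
def IsSubmeasure (φ : Set ℕ → ℝ≥0∞) : Prop :=
  φ ∅ = 0 ∧ (∀ n : ℕ, φ {n} ≠ ⊤) ∧ (∀ ⦃A B : Set ℕ⦄, A ⊆ B → φ A ≤ φ B) ∧
    ∀ A B : Set ℕ, φ (A ∪ B) ≤ φ A + φ B

/-- Lower semicontinuity: `φ(A) = lim_n φ(A ∩ [0,n])`. -/
def IsLSC (φ : Set ℕ → ℝ≥0∞) : Prop :=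
  ∀ A : Set ℕ, φ A = ⨆ n : ℕ, φ (A ∩ Set.Iic n)

/-- `A` belongs to the exhaustive ideal `Exh(φ)`: `lim_n φ(A \ [0,n]) = 0`. -/
def ExhMem (φ : Set ℕ → ℝ≥0∞) (A : Set ℕ) : Prop :=
  Tendsto (fun n : ℕ => φ (A \ Set.Iic n)) atTop (nhds 0)

/-! Choose `N k` with `2 ^ k < φ [0, N k]`, which lower semicontinuity and `φ ω = ∞` allow, and
put `ψ A = ∑ₖ 2⁻ᵏ φ (A ∩ [0, N k])`. Every summand is an lsc submeasure, and on `ω` every summand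
is at least `1`, so `ψ ω = ∞`. If `φ A < ∞`, the `k`-th summand of `ψ (A \ [0, n])` is bounded by
`2⁻ᵏ φ A` and vanishes once `n ≥ N k`, so `ψ (A \ [0, n]) → 0` by dominated convergence. -/

open Set MeasureTheory

namespace ENNReal

theorem tsum_iSup_of_monotone {β : Type*} {f : ℕ → β → ℝ≥0∞} (hf : Monotone f) :
    ∑' b, ⨆ n, f n b = ⨆ n, ∑' b, f n b := by
  let : MeasurableSpace β := ⊤
  simp only [← lintegral_count]
  exact lintegral_iSup (fun _ => measurable_from_top) hf

theorem tendsto_tsum_of_dominated_convergence {β : Type*} {F : ℕ → β → ℝ≥0∞} {f : β → ℝ≥0∞}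
    (bound : β → ℝ≥0∞) (h_bound : ∀ n b, F n b ≤ bound b) (h_fin : ∑' b, bound b ≠ ∞)
    (h_lim : ∀ b, Tendsto (F · b) atTop (nhds (f b))) :
    Tendsto (fun n => ∑' b, F n b) atTop (nhds (∑' b, f b)) := by
  let : MeasurableSpace β := ⊤
  simp only [← lintegral_count]
  exact tendsto_lintegral_of_dominated_convergence bound (fun _ => measurable_from_top)
    (fun n => Eventually.of_forall (h_bound n)) (by rwa [lintegral_count])
    (Eventually.of_forall h_lim)

theorem tsum_inv_two_pow_mul (a : ℝ≥0∞) : ∑' k : ℕ, 2⁻¹ ^ k * a = 2 * a := by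
  rw [ENNReal.tsum_mul_right, ENNReal.tsum_geometric, ENNReal.one_sub_inv_two, inv_inv]

end ENNReal

theorem IsLSC.exists_lt_apply_Iic {φ : Set ℕ → ℝ≥0∞} (hlsc : IsLSC φ) (hinf : φ univ = ⊤)
    {c : ℝ≥0∞} (hc : c < ⊤) : ∃ n, c < φ (Iic n) := by
  rw [hlsc univ] at hinf
  simp only [univ_inter] at hinf
  exact lt_iSup_iff.1 (hinf ▸ hc)

noncomputable def weightedTruncSum (φ : Set ℕ → ℝ≥0∞) (N : ℕ → ℕ) (A : Set ℕ) : ℝ≥0∞ :=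
  ∑' k, 2⁻¹ ^ k * φ (A ∩ Iic (N k))

section weightedTruncSum

variable {φ : Set ℕ → ℝ≥0∞} {N : ℕ → ℕ}

theorem isSubmeasure_weightedTruncSum (hφ : IsSubmeasure φ) :
    IsSubmeasure (weightedTruncSum φ N) := by
  obtain ⟨hφ_empty, hφ_singleton, hφ_mono, hφ_union⟩ := hφ
  refine ⟨by simp [weightedTruncSum, hφ_empty], fun n => ?_, fun A B hAB => ?_, fun A B => ?_⟩
  · refine ne_top_of_le_ne_top ?_ (ENNReal.tsum_le_tsum fun k =>
      mul_le_mul_right (hφ_mono (inter_subset_left (t := Iic (N k)))) _)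
    rw [ENNReal.tsum_inv_two_pow_mul]
    exact ENNReal.mul_ne_top ENNReal.ofNat_ne_top (hφ_singleton n)
  · exact ENNReal.tsum_le_tsum fun k =>
      mul_le_mul_right (hφ_mono (inter_subset_inter_left _ hAB)) _
  · refine (ENNReal.tsum_le_tsum fun k => ?_).trans_eq ENNReal.tsum_add
    rw [union_inter_distrib_right, ← mul_add]
    exact mul_le_mul_right (hφ_union _ _) _

theorem isLSC_weightedTruncSum (hmono : Monotone φ) (hlsc : IsLSC φ) :
    IsLSC (weightedTruncSum φ N) := by
  intro A
  have hterm : ∀ k, φ (A ∩ Iic (N k)) = ⨆ n, φ (A ∩ Iic n ∩ Iic (N k)) := fun k => by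
    simp_rw [hlsc (A ∩ Iic (N k)), inter_right_comm]
  simp_rw [weightedTruncSum, hterm, ENNReal.mul_iSup]
  refine ENNReal.tsum_iSup_of_monotone fun m n hmn k => ?_
  exact mul_le_mul_right
    (hmono (inter_subset_inter_left _ (inter_subset_inter_right _ (Iic_subset_Iic.2 hmn)))) _

theorem weightedTruncSum_univ (hN : ∀ k, 2 ^ k ≤ φ (Iic (N k))) :
    weightedTruncSum φ N univ = ⊤ := by
  refine top_le_iff.1 ((ENNReal.tsum_const_eq_top_of_ne_zero one_ne_zero).ge.trans
    (ENNReal.tsum_le_tsum fun k => ?_))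
  calc (1 : ℝ≥0∞) = 2⁻¹ ^ k * 2 ^ k := by
        rw [← mul_pow, ENNReal.inv_mul_cancel two_ne_zero ENNReal.ofNat_ne_top, one_pow]
    _ ≤ 2⁻¹ ^ k * φ (univ ∩ Iic (N k)) := by rw [univ_inter]; exact mul_le_mul_right (hN k) _

theorem exhMem_weightedTruncSum (hmono : Monotone φ) (hφ_empty : φ ∅ = 0) {A : Set ℕ}
    (hA : φ A ≠ ⊤) : ExhMem (weightedTruncSum φ N) A := by
  have hlim := ENNReal.tendsto_tsum_of_dominated_convergence
    (F := fun n k => 2⁻¹ ^ k * φ ((A \ Iic n) ∩ Iic (N k))) (f := fun _ => 0)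
    (fun k => 2⁻¹ ^ k * φ A)
    (fun n k => mul_le_mul_right (hmono (inter_subset_left.trans sdiff_subset)) _)
    (by rw [ENNReal.tsum_inv_two_pow_mul]; exact ENNReal.mul_ne_top ENNReal.ofNat_ne_top hA)
    fun k => ?_
  · rwa [tsum_zero] at hlim
  refine tendsto_const_nhds.congr' ?_
  filter_upwards [eventually_ge_atTop (N k)] with n hn
  have hempty : (A \ Iic n) ∩ Iic (N k) = ∅ :=
    eq_empty_of_forall_notMem fun x ⟨⟨_, hxn⟩, hxk⟩ => hxn (le_trans hxk hn)
  simp [hempty, hφ_empty]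

end weightedTruncSum

/-- For every lsc submeasure `φ` on `ω` with `φ(ω) = ∞` there is an lsc submeasure `ψ`
with `ψ(ω) = ∞` and `Fin(φ) ⊆ Exh(ψ)`. -/
theorem stmt_9 (φ : Set ℕ → ℝ≥0∞) (hφ : IsSubmeasure φ) (hlsc : IsLSC φ)
    (hinf : φ Set.univ = ⊤) :
    ∃ ψ : Set ℕ → ℝ≥0∞, IsSubmeasure ψ ∧ IsLSC ψ ∧ ψ Set.univ = ⊤ ∧
      ∀ A : Set ℕ, φ A ≠ ⊤ → ExhMem ψ A := by
  choose N hN using fun k : ℕ =>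
    hlsc.exists_lt_apply_Iic hinf (ENNReal.pow_lt_top (a := 2) ENNReal.ofNat_lt_top (n := k))
  have hφ_mono : Monotone φ := hφ.2.2.1
  exact ⟨weightedTruncSum φ N, isSubmeasure_weightedTruncSum hφ,
    isLSC_weightedTruncSum hφ_mono hlsc, weightedTruncSum_univ fun k => (hN k).le,
    fun A hA => exhMem_weightedTruncSum hφ_mono hφ.1 hA⟩
end

section
/- Let φ be a lower semicontinuous submeasure on ω with φ(ω) = ∞, and let (P_n) be a ⪯-decreasing sequence of finite partitions of ω (P_{n+1} refines P_n). Then there exist a ⊆-decreasing sequence (A_n) with A_n ∈ P_n and a sequence (F_n) of pairwise disjoint finite subsets of ω such that F_n ⊆ A_n and φ(F_n) ≥ n+1 for every n. -/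
open Filter
open scoped ENNReal

/-- `P` is a finite partition of `ω` (into nonempty pieces). -/
def IsFinPartition (P : Finset (Set ℕ)) : Prop :=
  (⋃₀ (P : Set (Set ℕ))) = Set.univ ∧
  (∀ A ∈ P, ∀ B ∈ P, A ≠ B → A ∩ B = ∅) ∧ ∀ A ∈ P, A ≠ ∅

/-- `P' ⪯ P`: every member of `P'` is contained in or disjoint from each member of `P`. -/
def Refines (P' P : Finset (Set ℕ)) : Prop :=
  ∀ A ∈ P, ∀ B ∈ P', B ⊆ A ∨ A ∩ B = ∅

/-!
Each piece of infinite measure splits, along the next finite partition, into finitely many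
pieces, so by subadditivity one of them again has infinite measure; this gives the decreasing
chain `A n`. Since finite sets have finite measure, `A n` minus any initial segment still has
infinite measure, and lower semicontinuity then yields a finite window `(t, k]` on which `A n`
has measure at least `n + 1`. Taking consecutive windows `(t n, t (n + 1)]` makes the `F n`
disjoint.
-/

open Function Set

theorem exists_seq_of_exists_succ {α : Type*} {p : ℕ → α → Prop} {r : ℕ → α → α → Prop}
    (h0 : ∃ a, p 0 a) (hsucc : ∀ n a, p n a → ∃ b, p (n + 1) b ∧ r n a b) :
    ∃ f : ℕ → α, (∀ n, p n (f n)) ∧ ∀ n, r n (f n) (f (n + 1)) := by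
  choose g hg using hsucc
  obtain ⟨a, ha⟩ := h0
  let f : ∀ n, {a // p n a} := fun n =>
    Nat.rec ⟨a, ha⟩ (fun n x => ⟨g n x.1 x.2, (hg n x.1 x.2).1⟩) n
  exact ⟨fun n => (f n).1, fun n => (f n).2, fun n => (hg n _ (f n).2).2⟩

namespace IsSubmeasure

variable {φ : Set ℕ → ℝ≥0∞}

lemma mono (hφ : IsSubmeasure φ) ⦃A B : Set ℕ⦄ (h : A ⊆ B) : φ A ≤ φ B := hφ.2.2.1 h

lemma union_le (hφ : IsSubmeasure φ) (A B : Set ℕ) : φ (A ∪ B) ≤ φ A + φ B := hφ.2.2.2 A B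

lemma biUnion_le (hφ : IsSubmeasure φ) {ι : Type*} (s : Finset ι) (f : ι → Set ℕ) :
    φ (⋃ i ∈ s, f i) ≤ ∑ i ∈ s, φ (f i) :=
  Finset.apply_union_le_sum hφ.1 (hφ.union_le _ _) s

lemma exists_mem_eq_top_of_biUnion (hφ : IsSubmeasure φ) {ι : Type*} {s : Finset ι}
    {f : ι → Set ℕ} (h : φ (⋃ i ∈ s, f i) = ⊤) : ∃ i ∈ s, φ (f i) = ⊤ := by
  by_contra! hfin
  have hsum : ∑ i ∈ s, φ (f i) ≠ ⊤ := ENNReal.sum_ne_top.2 hfin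
  exact hsum (top_le_iff.1 (h ▸ hφ.biUnion_le s f))

lemma ne_top_of_finite (hφ : IsSubmeasure φ) {F : Set ℕ} (hF : F.Finite) : φ F ≠ ⊤ := by
  have hcover : F ⊆ ⋃ n ∈ hF.toFinset, ({n} : Set ℕ) := fun x hx => by simpa using hx
  exact ne_top_of_le_ne_top (ENNReal.sum_ne_top.2 fun n _ => hφ.2.1 n)
    ((hφ.mono hcover).trans (hφ.biUnion_le _ _))

lemma diff_Iic_eq_top (hφ : IsSubmeasure φ) {A : Set ℕ} (hA : φ A = ⊤) (t : ℕ) :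
    φ (A \ Iic t) = ⊤ := by
  have hsplit : φ A ≤ φ (A ∩ Iic t) + φ (A \ Iic t) :=
    (hφ.mono (inter_union_sdiff A (Iic t)).ge).trans (hφ.union_le _ _)
  have hhead : φ (A ∩ Iic t) ≠ ⊤ := hφ.ne_top_of_finite ((finite_Iic t).inter_of_right A)
  rw [hA, top_le_iff, ENNReal.add_eq_top] at hsplit
  exact hsplit.resolve_left hhead

lemma exists_le_inter_Ioc (hφ : IsSubmeasure φ) (hlsc : IsLSC φ) {A : Set ℕ} (hA : φ A = ⊤)
    {c : ℝ≥0∞} (hc : c ≠ ⊤) (t : ℕ) : ∃ k, c ≤ φ (A ∩ Ioc t k) := by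
  have hsup : c < ⨆ k, φ ((A \ Iic t) ∩ Iic k) := by
    rw [← hlsc, hφ.diff_Iic_eq_top hA t]
    exact hc.lt_top
  obtain ⟨k, hk⟩ := lt_iSup_iff.1 hsup
  refine ⟨k, hk.le.trans (hφ.mono ?_)⟩
  rintro x ⟨⟨hxA, hxt⟩, hxk⟩
  exact ⟨hxA, not_le.1 hxt, hxk⟩

lemma exists_inter_eq_top_of_sUnion_eq_univ (hφ : IsSubmeasure φ) {P : Finset (Set ℕ)}
    (hcover : ⋃₀ (P : Set (Set ℕ)) = univ) {S : Set ℕ} (hS : φ S = ⊤) :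
    ∃ B ∈ P, φ (S ∩ B) = ⊤ := by
  refine hφ.exists_mem_eq_top_of_biUnion ?_
  rwa [← inter_iUnion₂, ← Finset.set_biUnion_coe, ← sUnion_eq_biUnion, hcover, inter_univ]

lemma _root_.Refines.exists_subset_eq_top (hφ : IsSubmeasure φ)
    {P' P : Finset (Set ℕ)} (href : Refines P' P) (hcover : ⋃₀ (P' : Set (Set ℕ)) = univ)
    {S : Set ℕ} (hS : S ∈ P) (hSφ : φ S = ⊤) : ∃ C ∈ P', C ⊆ S ∧ φ C = ⊤ := by
  obtain ⟨C, hC, hSC⟩ := hφ.exists_inter_eq_top_of_sUnion_eq_univ hcover hSφ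
  have hmeet : S ∩ C ≠ ∅ := fun h => ENNReal.zero_ne_top (hφ.1 ▸ h ▸ hSC)
  exact ⟨C, hC, (href S hS C hC).resolve_right hmeet,
    top_le_iff.1 (hSC ▸ hφ.mono inter_subset_right)⟩

lemma exists_nested_seq_eq_top (hφ : IsSubmeasure φ) (hinf : φ univ = ⊤)
    {P : ℕ → Finset (Set ℕ)} (hcover : ∀ n, ⋃₀ (P n : Set (Set ℕ)) = univ)
    (href : ∀ n, Refines (P (n + 1)) (P n)) :
    ∃ A : ℕ → Set ℕ, (∀ n, A n ∈ P n ∧ φ (A n) = ⊤) ∧ ∀ n, A (n + 1) ⊆ A n := by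
  refine exists_seq_of_exists_succ (p := fun n S => S ∈ P n ∧ φ S = ⊤) (r := fun _ S C => C ⊆ S)
    ?_ fun n S ⟨hS, hSφ⟩ => ?_
  · obtain ⟨B, hB, hBφ⟩ := hφ.exists_inter_eq_top_of_sUnion_eq_univ (hcover 0) hinf
    exact ⟨B, hB, by rwa [univ_inter] at hBφ⟩
  · obtain ⟨C, hC, hCS, hCφ⟩ := (href n).exists_subset_eq_top hφ (hcover (n + 1)) hS hSφ
    exact ⟨C, ⟨hC, hCφ⟩, hCS⟩

lemma exists_pairwise_disjoint_finite_le (hφ : IsSubmeasure φ) (hlsc : IsLSC φ)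
    {A : ℕ → Set ℕ} (hA : ∀ n, φ (A n) = ⊤) {c : ℕ → ℝ≥0∞} (hc : ∀ n, c n ≠ ⊤) :
    ∃ F : ℕ → Set ℕ, (∀ n, (F n).Finite) ∧ Pairwise (Disjoint on F) ∧
      (∀ n, F n ⊆ A n) ∧ ∀ n, c n ≤ φ (F n) := by
  have hstep : ∀ n t, ∃ t', t ≤ t' ∧ c n ≤ φ (A n ∩ Ioc t t') := fun n t => by
    obtain ⟨k, hk⟩ := hφ.exists_le_inter_Ioc hlsc (hA n) (hc n) t
    exact ⟨max t k, le_max_left _ _,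
      hk.trans (hφ.mono (inter_subset_inter_right _ (Ioc_subset_Ioc_right (le_max_right _ _))))⟩
  obtain ⟨t, -, ht⟩ := exists_seq_of_exists_succ (p := fun _ _ => True)
    (r := fun n t t' => t ≤ t' ∧ c n ≤ φ (A n ∩ Ioc t t')) ⟨0, trivial⟩
    fun n t _ => (hstep n t).imp fun _ h => ⟨trivial, h⟩
  have ht_mono : Monotone t := monotone_nat_of_le_succ fun n => (ht n).1
  exact ⟨fun n => A n ∩ Ioc (t n) (t (n + 1)), fun n => (finite_Ioc _ _).inter_of_right _,
    fun m n hmn => (ht_mono.pairwise_disjoint_on_Ioc_succ hmn).mono inter_subset_right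
      inter_subset_right,
    fun n => inter_subset_left, fun n => (ht n).2⟩

end IsSubmeasure

/-- For an lsc submeasure `φ` with `φ(ω) = ∞` and a `⪯`-decreasing sequence `(P_n)` of
finite partitions of `ω`, there are a `⊆`-decreasing selection `(A_n ∈ P_n)` and pairwise
disjoint finite sets `F_n ⊆ A_n` with `φ(F_n) ≥ n + 1`. -/
theorem stmt_10 (φ : Set ℕ → ℝ≥0∞) (hφ : IsSubmeasure φ) (hlsc : IsLSC φ)
    (hinf : φ Set.univ = ⊤)
    (P : ℕ → Finset (Set ℕ)) (hpart : ∀ n, IsFinPartition (P n))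
    (href : ∀ n, Refines (P (n + 1)) (P n)) :
    ∃ (A : ℕ → Set ℕ) (F : ℕ → Set ℕ),
      (∀ n, A n ∈ P n) ∧ (∀ n, A (n + 1) ⊆ A n) ∧
      (∀ n, (F n).Finite) ∧ (∀ m n, m ≠ n → F m ∩ F n = ∅) ∧
      (∀ n, F n ⊆ A n) ∧ ∀ n : ℕ, (n + 1 : ℝ≥0∞) ≤ φ (F n) := by
  obtain ⟨A, hA, hA_succ⟩ := hφ.exists_nested_seq_eq_top hinf (fun n => (hpart n).1) href
  obtain ⟨F, hF_fin, hF_disj, hFA, hFφ⟩ := hφ.exists_pairwise_disjoint_finite_le hlsc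
    (fun n => (hA n).2) (c := fun n => (n : ℝ≥0∞) + 1) fun n => by finiteness
  exact ⟨A, F, fun n => (hA n).1, hA_succ, hF_fin,
    fun m n hmn => disjoint_iff_inter_eq_empty.1 (hF_disj hmn), hFA, hFφ⟩
end

section
/- Every non-atomic ideal I on ω has the Local-to-Global Boundedness Property for submeasures: whenever φ is a lower semicontinuous submeasure on ω with I ⊆ Fin(φ) = {A : φ(A) < ∞}, then φ(ω) < ∞. -/
open Filter
open scoped ENNReal

/-- `I` is an ideal on `ω` containing all finite sets. -/
def IsIdeal (I : Set (Set ℕ)) : Prop :=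
  (∀ A : Set ℕ, A.Finite → A ∈ I) ∧ (∀ ⦃A B : Set ℕ⦄, B ∈ I → A ⊆ B → A ∈ I) ∧
    ∀ ⦃A B : Set ℕ⦄, A ∈ I → B ∈ I → A ∪ B ∈ I
/-- `I` is non-atomic: there is a `⪯`-decreasing sequence of finite partitions of `ω`
such that every set almost contained in some `⊆`-decreasing selection lies in `I`. -/
def NonAtomicIdeal (I : Set (Set ℕ)) : Prop :=
  ∃ P : ℕ → Finset (Set ℕ), (∀ n, IsFinPartition (P n)) ∧
    (∀ n, Refines (P (n + 1)) (P n)) ∧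
    ∀ A : ℕ → Set ℕ, (∀ n, A n ∈ P n) → (∀ n, A (n + 1) ⊆ A n) →
      ∀ E : Set ℕ, (∀ n, (E \ A n).Finite) → E ∈ I

/-! If `φ(ω) = ∞`, subadditivity over the finite partitions `P n` yields a `⊆`-decreasing branch
`A n ∈ P n` with `φ (A n) = ∞`. Lower semicontinuity gives finite sets `F n ⊆ A n` with
`φ (F n) > n`. Their union `E` is almost contained in every `A n`, so `E ∈ I` by non-atomicity,
while `φ E = ∞`. -/

namespace IsSubmeasure

variable {φ : Set ℕ → ℝ≥0∞}

lemma sUnion_le_sum (hφ : IsSubmeasure φ) (s : Finset (Set ℕ)) :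
    φ (⋃₀ (s : Set (Set ℕ))) ≤ ∑ A ∈ s, φ A := by
  classical
  induction s using Finset.induction with
  | empty => simp [hφ.1]
  | insert a s _ ih =>
    rw [Finset.coe_insert, Set.sUnion_insert, Finset.sum_insert ‹_›]
    exact (hφ.2.2.2 _ _).trans (add_le_add le_rfl ih)

lemma exists_mem_eq_top (hφ : IsSubmeasure φ) {s : Finset (Set ℕ)}
    (h : φ (⋃₀ (s : Set (Set ℕ))) = ⊤) : ∃ A ∈ s, φ A = ⊤ := by
  by_contra! hfin
  have hsum : ∑ A ∈ s, φ A < ⊤ := ENNReal.sum_lt_top.2 fun A hA => (hfin A hA).lt_top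
  exact (h ▸ hφ.sUnion_le_sum s).not_gt hsum

lemma exists_refining_eq_top (hφ : IsSubmeasure φ) {P P' : Finset (Set ℕ)}
    (hcover : ⋃₀ (P' : Set (Set ℕ)) = Set.univ) (href : Refines P' P) {S : Set ℕ} (hS : S ∈ P)
    (hSφ : φ S = ⊤) : ∃ T ∈ P', T ⊆ S ∧ φ T = ⊤ := by
  classical
  have hcovS : S ⊆ ⋃₀ ((P'.filter (· ⊆ S) : Finset (Set ℕ)) : Set (Set ℕ)) := by
    intro x hx
    obtain ⟨T, hT, hxT⟩ := hcover.symm ▸ Set.mem_univ x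
    rcases href S hS T hT with hTS | hdisj
    · exact ⟨T, Finset.mem_filter.2 ⟨hT, hTS⟩, hxT⟩
    · exact absurd (hdisj ▸ Set.mem_inter hx hxT) (Set.notMem_empty x)
  obtain ⟨T, hT, hTφ⟩ := hφ.exists_mem_eq_top (top_le_iff.1 (hSφ ▸ hφ.2.2.1 hcovS))
  exact ⟨T, (Finset.mem_filter.1 hT).1, (Finset.mem_filter.1 hT).2, hTφ⟩

lemma exists_decreasing_selection_eq_top (hφ : IsSubmeasure φ) {P : ℕ → Finset (Set ℕ)}
    (hP : ∀ n, IsFinPartition (P n)) (href : ∀ n, Refines (P (n + 1)) (P n))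
    (htop : φ Set.univ = ⊤) :
    ∃ A : ℕ → Set ℕ, (∀ n, A n ∈ P n) ∧ (∀ n, A (n + 1) ⊆ A n) ∧ ∀ n, φ (A n) = ⊤ := by
  obtain ⟨A₀, hA₀P, hA₀φ⟩ := hφ.exists_mem_eq_top (s := P 0) ((hP 0).1 ▸ htop)
  choose! next hnextP hnext_sub hnextφ using fun n S =>
    hφ.exists_refining_eq_top (hP (n + 1)).1 (href n) (S := S)
  let A : ℕ → Set ℕ := fun n => Nat.rec A₀ next n
  have hA : ∀ n, A n ∈ P n ∧ φ (A n) = ⊤ := fun n => by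
    induction n with
    | zero => exact ⟨hA₀P, hA₀φ⟩
    | succ n ih => exact ⟨hnextP n _ ih.1 ih.2, hnextφ n _ ih.1 ih.2⟩
  exact ⟨A, fun n => (hA n).1, fun n => hnext_sub n _ (hA n).1 (hA n).2, fun n => (hA n).2⟩

end IsSubmeasure

lemma IsLSC.exists_lt_inter_Iic {φ : Set ℕ → ℝ≥0∞} (hφ : IsLSC φ) {S : Set ℕ} (hS : φ S = ⊤)
    (c : ℝ≥0∞) (hc : c < ⊤) : ∃ k : ℕ, c < φ (S ∩ Set.Iic k) :=
  lt_iSup_iff.1 (hφ S ▸ hS ▸ hc)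

lemma finite_iUnion_diff_of_antitone {A F : ℕ → Set ℕ} (hA : Antitone A) (hFA : ∀ n, F n ⊆ A n)
    (hF : ∀ n, (F n).Finite) (n : ℕ) : ((⋃ m, F m) \ A n).Finite := by
  refine (Set.finite_lt_nat n).biUnion (fun m _ => hF m) |>.subset ?_
  rintro x ⟨hx, hxA⟩
  obtain ⟨m, hxm⟩ := Set.mem_iUnion.1 hx
  refine Set.mem_biUnion (x := m) ?_ hxm
  by_contra! hnm
  exact hxA (hA (not_lt.1 hnm) (hFA m hxm))

theorem stmt_11_general (I : Set (Set ℕ)) (hna : NonAtomicIdeal I) :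
    ∀ φ : Set ℕ → ℝ≥0∞, IsSubmeasure φ → IsLSC φ →
      (∀ A ∈ I, φ A ≠ ⊤) → φ Set.univ ≠ ⊤ := by
  intro φ hφ hlsc hfin htop
  obtain ⟨P, hP, href, hsel⟩ := hna
  obtain ⟨A, hAP, hA_succ, hAφ⟩ := hφ.exists_decreasing_selection_eq_top hP href htop
  choose k hk using fun n : ℕ => hlsc.exists_lt_inter_Iic (hAφ n) n (ENNReal.natCast_lt_top n)
  set F : ℕ → Set ℕ := fun n => A n ∩ Set.Iic (k n)
  have hEI : (⋃ n, F n) ∈ I := hsel A hAP hA_succ _ <|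
    finite_iUnion_diff_of_antitone (antitone_nat_of_succ_le hA_succ)
      (fun _ => Set.inter_subset_left) (fun n => (Set.finite_Iic (k n)).subset Set.inter_subset_right)
  obtain ⟨n, hn⟩ := ENNReal.exists_nat_gt (hfin _ hEI)
  exact (hn.trans (hk n)).not_ge (hφ.2.2.1 (Set.subset_iUnion F n))

/-- Every non-atomic ideal on `ω` has the Local-to-Global Boundedness Property for
submeasures: if `φ` is an lsc submeasure with `I ⊆ Fin(φ)`, then `φ(ω) < ∞`. -/
theorem stmt_11 (I : Set (Set ℕ)) (hI : IsIdeal I) (hna : NonAtomicIdeal I) :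
    ∀ φ : Set ℕ → ℝ≥0∞, IsSubmeasure φ → IsLSC φ →
      (∀ A ∈ I, φ A ≠ ⊤) → φ Set.univ ≠ ⊤ :=
  stmt_11_general I hna
end

section
/- Let φ be a density submeasure on ω with φ(ω) = ∞, i.e. φ = sup_n μ_n for a sequence (μ_n) of finitely supported non-negative measures on ω with pairwise disjoint supports. Then there exist a finitely additive non-negative real-valued set function ρ on the ideal Exh(φ) and a sequence (A_k) of pairwise disjoint finite subsets of ω such that ρ(A_k) > k for every k. -/
open Filter
open scoped ENNReal

/-!
Since `φ(ω) = sup_n μ_n(ω) = ∞` while every `μ_n(ω)` is finite, one can pick indices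
`n_0 < n_1 < ⋯` with `2^{-k} μ_{n_k}(ω) > k`, and take for `ρ` the (real part of the) measure
`ν = ∑_k 2^{-k} μ_{n_k}` and `A_k = supp μ_{n_k}`, so that `ν(A_k) = 2^{-k} μ_{n_k}(ω) > k`.
`ν` is finite on `Exh(φ)`: if `φ(A \ [0,m]) < 1`, then `ν(A \ [0,m]) ≤ ∑_k 2^{-k} < ∞`, and
`ν(A ∩ [0,m]) < ∞` because, the supports being disjoint, `ν` has finite point masses.
-/

open Function

theorem ENNReal.frequently_lt_of_iSup_eq_top {f : ℕ → ℝ≥0∞} (hf : ∀ n, f n ≠ ∞)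
    (htop : ⨆ n, f n = ∞) {c : ℝ≥0∞} (hc : c ≠ ∞) : ∃ᶠ n in atTop, c < f n := by
  intro h
  obtain ⟨N, hN⟩ := eventually_atTop.mp h
  have hle : ⨆ n, f n ≤ c ⊔ ∑ n ∈ Finset.range N, f n := by
    refine iSup_le fun n => ?_
    rcases lt_or_ge n N with hn | hn
    · exact le_sup_of_le_right (Finset.single_le_sum (fun _ _ => zero_le)
        (Finset.mem_range.mpr hn))
    · exact le_sup_of_le_left (not_lt.mp (hN n hn))
  rw [htop, top_le_iff, max_eq_top] at hle
  exact hle.elim hc (ENNReal.sum_ne_top.mpr fun n _ => hf n)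

section WeightMeasure

variable {α : Type*}

noncomputable def weightMeasure (v : α → ℝ≥0∞) (A : Set α) : ℝ≥0∞ := ∑' i : A, v i

variable {v : α → ℝ≥0∞} {A B : Set α}

theorem weightMeasure_union (h : Disjoint A B) :
    weightMeasure v (A ∪ B) = weightMeasure v A + weightMeasure v B :=
  ENNReal.summable.tsum_union_disjoint h ENNReal.summable

theorem weightMeasure_ne_top (hv : ∀ i, v i ≠ ∞) (hA : (A ∩ support v).Finite) :
    weightMeasure v A ≠ ∞ := by
  rw [weightMeasure, tsum_subtype, tsum_eq_sum' (s := hA.toFinset)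
    (by rw [Set.support_indicator, hA.coe_toFinset])]
  exact ENNReal.sum_ne_top.mpr fun i _ => by
    by_cases hi : i ∈ A <;> simp [hi, hv]

theorem weightMeasure_tsum {u : ℕ → α → ℝ≥0∞} :
    weightMeasure (fun i => ∑' k, u k i) A = ∑' k, weightMeasure (u k) A :=
  ENNReal.tsum_comm

theorem weightMeasure_const_mul (c : ℝ≥0∞) :
    weightMeasure (fun i => c * v i) A = c * weightMeasure v A :=
  ENNReal.tsum_mul_left

end WeightMeasure

section DisjointSupports

variable {α : Type*} {u : ℕ → α → ℝ≥0∞} (hu : Pairwise (Disjoint on fun k => support (u k)))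
include hu

theorem tsum_mul_apply_of_mem_support (c : ℕ → ℝ≥0∞) {i : α} {j : ℕ} (hi : i ∈ support (u j)) :
    ∑' k, c k * u k i = c j * u j i :=
  tsum_eq_single j fun k hk => by
    rw [notMem_support.mp ((hu hk).symm.notMem_of_mem_left hi), mul_zero]

theorem tsum_mul_apply_ne_top {c : ℕ → ℝ≥0∞} (hc : ∀ k, c k ≠ ∞) (hfin : ∀ k i, u k i ≠ ∞)
    (i : α) : ∑' k, c k * u k i ≠ ∞ := by
  rcases em (∃ j, i ∈ support (u j)) with ⟨j, hj⟩ | hi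
  · rw [tsum_mul_apply_of_mem_support hu c hj]
    exact ENNReal.mul_ne_top (hc j) (hfin j i)
  · simp [notMem_support.mp fun h => hi ⟨_, h⟩]

theorem weightMeasure_tsum_mul_support (c : ℕ → ℝ≥0∞) (j : ℕ) :
    weightMeasure (fun i => ∑' k, c k * u k i) (support (u j)) = c j * ∑' i, u j i := by
  rw [← tsum_subtype_support (u j), ← ENNReal.tsum_mul_left]
  exact tsum_congr fun i => tsum_mul_apply_of_mem_support hu c i.2

end DisjointSupports

theorem weightMeasure_tsum_mul_ne_top_of_exhMem {u : ℕ → ℕ → ℝ≥0∞}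
    (hu : Pairwise (Disjoint on fun k => support (u k))) (hfin : ∀ k i, u k i ≠ ∞)
    {c : ℕ → ℝ≥0∞} (hc : ∑' k, c k ≠ ∞) {φ : Set ℕ → ℝ≥0∞}
    (hφ : ∀ k A, weightMeasure (u k) A ≤ φ A) {S : Set ℕ} (hS : ExhMem φ S) :
    weightMeasure (fun i => ∑' k, c k * u k i) S ≠ ∞ := by
  obtain ⟨m, hm⟩ := (hS.eventually_lt_const zero_lt_one).exists
  have hhead : weightMeasure (fun i => ∑' k, c k * u k i) (S ∩ Set.Iic m) ≠ ∞ :=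
    weightMeasure_ne_top (tsum_mul_apply_ne_top hu (ENNReal.ne_top_of_tsum_ne_top hc) hfin)
      ((Set.finite_Iic m).subset fun i hi => hi.1.2)
  have htail : weightMeasure (fun i => ∑' k, c k * u k i) (S \ Set.Iic m) ≠ ∞ := by
    rw [weightMeasure_tsum]
    simp only [weightMeasure_const_mul]
    refine ne_top_of_le_ne_top hc (ENNReal.tsum_le_tsum fun k => ?_)
    calc c k * weightMeasure (u k) (S \ Set.Iic m)
        _ ≤ c k * 1 := by gcongr; exact (hφ k _).trans hm.le
        _ = c k := mul_one _
  rw [← Set.inter_union_sdiff S (Set.Iic m), weightMeasure_union Set.disjoint_sdiff_inter.symm]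
  exact ENNReal.add_ne_top.mpr ⟨hhead, htail⟩

/-- For a density submeasure `φ = sup_n μ_n` on `ω` (where the `μ_n` are given by the
weight functions `w n` with pairwise disjoint finite supports) with `φ(ω) = ∞`, there exist
a finitely additive non-negative set function `ρ` on `Exh(φ)` and pairwise disjoint finite
sets `A_k` with `ρ(A_k) > k`. -/
theorem stmt_13 (w : ℕ → ℕ → ℝ≥0∞)
    (hfin : ∀ n k, w n k ≠ ⊤)
    (hsupfin : ∀ n, (Function.support (w n)).Finite)
    (hdisj : ∀ m n, m ≠ n → Function.support (w m) ∩ Function.support (w n) = ∅)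
    (φ : Set ℕ → ℝ≥0∞) (hφ : ∀ A : Set ℕ, φ A = ⨆ n, ∑' k : A, w n k)
    (hinf : φ Set.univ = ⊤) :
    ∃ ρ : Set ℕ → ℝ,
      (∀ A : Set ℕ, ExhMem φ A → 0 ≤ ρ A) ∧
      (∀ A B : Set ℕ, ExhMem φ A → ExhMem φ B → A ∩ B = ∅ → ρ (A ∪ B) = ρ A + ρ B) ∧
      ∃ A : ℕ → Set ℕ, (∀ k, (A k).Finite) ∧ (∀ k j, k ≠ j → A k ∩ A j = ∅) ∧
        ∀ k : ℕ, (k : ℝ) < ρ (A k) := by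
  set T : ℕ → ℝ≥0∞ := fun n => ∑' i, w n i
  have hT : ∀ n, T n ≠ ⊤ := fun n => by
    simpa [weightMeasure] using
      weightMeasure_ne_top (A := Set.univ) (hfin n) (by simpa using hsupfin n)
  have hTsup : ⨆ n, T n = ⊤ := by simpa [hφ] using hinf
  have hfreq (k : ℕ) : ∃ᶠ n in atTop, (k : ℝ≥0∞) < 2⁻¹ ^ k * T n := by
    refine ENNReal.frequently_lt_of_iSup_eq_top (fun n => ENNReal.mul_ne_top (by simp) (hT n)) ?_
      (ENNReal.natCast_ne_top k)
    rw [← ENNReal.mul_iSup, hTsup, ENNReal.mul_top (by simp)]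
  obtain ⟨g, hg, hgT⟩ := extraction_forall_of_frequently hfreq
  have hdisj' : Pairwise (Disjoint on fun k => support (w (g k))) := fun k j hkj =>
    Set.disjoint_iff_inter_eq_empty.mpr (hdisj _ _ (hg.injective.ne hkj))
  set ν := weightMeasure (fun i => ∑' k, 2⁻¹ ^ k * w (g k) i)
  have hνfin : ∀ S, ExhMem φ S → ν S ≠ ⊤ := fun S hS =>
    weightMeasure_tsum_mul_ne_top_of_exhMem hdisj' (fun _ => hfin _)
      (by simp [ENNReal.tsum_geometric])
      (fun k A => hφ A ▸ le_iSup (fun n => ∑' i : A, w n i) (g k)) hS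
  refine ⟨fun S => (ν S).toReal, fun _ _ => ENNReal.toReal_nonneg, fun A B hA hB hAB => ?_,
    fun k => support (w (g k)), fun k => hsupfin _, fun k j hkj => hdisj _ _ (hg.injective.ne hkj),
    fun k => ?_⟩
  · rw [← ENNReal.toReal_add (hνfin A hA) (hνfin B hB)]
    exact congrArg ENNReal.toReal (weightMeasure_union (Set.disjoint_iff_inter_eq_empty.mpr hAB))
  · have hν : ν (support (w (g k))) = 2⁻¹ ^ k * T (g k) :=
      weightMeasure_tsum_mul_support hdisj' _ k
    show (k : ℝ) < (ν (support (w (g k)))).toReal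
    rw [← ENNReal.toReal_natCast, hν]
    exact (ENNReal.toReal_lt_toReal (ENNReal.natCast_ne_top k)
      (ENNReal.mul_ne_top (by simp) (hT _))).mpr (hgT k)
end

section
/- For every density submeasure φ on ω with φ(ω) = ∞, the ideal Exh(φ) is contained in a summable ideal: there exists f : ω → [0,∞) with Σ_n f(n) = ∞ such that Σ_{n ∈ A} f(n) < ∞ for every A ∈ Exh(φ). -/
open Filter
open scoped ENNReal

/-! Pick measures `μ_{m_j}` of total mass greater than `2 ^ j` and let `g` be the sum of the
`μ_{m_j}`, each normalized to total mass `1`; then `Σ_k g k = ∞`, and `g k < ∞` because the supports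
are disjoint. For every `s`, `Σ_{k ∈ s} g k ≤ Σ_j φ(s) / 2 ^ j = 2 φ(s)`. If `A ∈ Exh(φ)` then
`φ(A \ [0,M]) < ∞` for some `M`, and the finite head `A ∩ [0,M]` adds only finitely much. -/

open Set Function

theorem iSup_ne_top_of_pairwise_disjoint_support {ι α : Type*} {w : ι → α → ℝ≥0∞}
    (hfin : ∀ i a, w i a ≠ ⊤) (hdisj : Pairwise (Disjoint on fun i => support (w i))) (a : α) :
    ⨆ i, w i a ≠ ⊤ := by
  by_cases h : ∃ i, w i a ≠ 0
  · obtain ⟨i, hi⟩ := h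
    refine ne_top_of_le_ne_top (hfin i a) (iSup_le fun j => ?_)
    rcases eq_or_ne j i with rfl | hji
    · exact le_rfl
    · have : w j a = 0 := notMem_support.1 fun hj => (hdisj hji).ne_of_mem hj hi rfl
      simp [this]
  · push Not at h
    simp [h]

theorem tsum_ne_top_of_finite_support {α : Type*} {f : α → ℝ≥0∞} (hfin : ∀ a, f a ≠ ⊤)
    (hsupp : (support f).Finite) : ∑' a, f a ≠ ⊤ := by
  rw [tsum_eq_sum' hsupp.coe_toFinset.ge]
  exact ENNReal.sum_ne_top.2 fun a _ => hfin a

theorem summable_toReal_iff_tsum_ne_top {α : Type*} {f : α → ℝ≥0∞} (hf : ∀ a, f a ≠ ⊤) :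
    Summable (fun a => (f a).toReal) ↔ ∑' a, f a ≠ ⊤ := by
  refine ⟨fun hs => ?_, ENNReal.summable_toReal⟩
  rw [← tsum_congr fun a => ENNReal.ofReal_toReal (hf a),
    ← ENNReal.ofReal_tsum_of_nonneg (fun a => ENNReal.toReal_nonneg) hs]
  exact ENNReal.ofReal_ne_top

theorem tsum_subtype_ne_top_of_diff_Iic {f : ℕ → ℝ≥0∞} (hf : ∀ n, f n ≠ ⊤) {A : Set ℕ} (M : ℕ)
    (htail : ∑' n : ↑(A \ Iic M), f n ≠ ⊤) : ∑' n : A, f n ≠ ⊤ := by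
  have hhead : ∑' n : Iic M, f n ≠ ⊤ := by
    rw [tsum_fintype]
    exact ENNReal.sum_ne_top.2 fun n _ => hf n
  refine ne_top_of_le_ne_top (ENNReal.add_ne_top.2 ⟨hhead, htail⟩) ?_
  calc ∑' n : A, f n ≤ ∑' n : ↑(Iic M ∪ A \ Iic M), f n :=
        ENNReal.tsum_mono_subtype f fun n hn => by by_cases h : n ≤ M <;> simp [*]
    _ ≤ _ := ENNReal.tsum_union_le f _ _

section NormalizedSum

variable {α : Type*} (v : ℕ → α → ℝ≥0∞)

noncomputable def normalizedSum (a : α) : ℝ≥0∞ :=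
  ∑' j, v j a / ∑' b, v j b

theorem tsum_subtype_normalizedSum (s : Set α) :
    ∑' a : s, normalizedSum v a = ∑' j, (∑' a : s, v j a) / ∑' b, v j b := by
  simp only [normalizedSum, div_eq_mul_inv]
  rw [ENNReal.tsum_comm]
  exact tsum_congr fun j => ENNReal.tsum_mul_right

theorem tsum_normalizedSum_eq_top (h0 : ∀ j, ∑' b, v j b ≠ 0) (htop : ∀ j, ∑' b, v j b ≠ ⊤) :
    ∑' a, normalizedSum v a = ⊤ := by
  have := tsum_subtype_normalizedSum v univ
  simp only [tsum_univ] at this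
  rw [this, tsum_congr fun j => ENNReal.div_self (h0 j) (htop j)]
  exact ENNReal.tsum_const_eq_top_of_ne_zero one_ne_zero

variable {v}

theorem tsum_subtype_normalizedSum_le (hmass : ∀ j, 2 ^ j ≤ ∑' b, v j b) (s : Set α) :
    ∑' a : s, normalizedSum v a ≤ 2 * ⨆ j, ∑' a : s, v j a := by
  rw [tsum_subtype_normalizedSum]
  calc ∑' j, (∑' a : s, v j a) / ∑' b, v j b
      ≤ ∑' j : ℕ, (⨆ i, ∑' a : s, v i a) * 2⁻¹ ^ j := by
        refine ENNReal.tsum_le_tsum fun j => ?_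
        rw [← ENNReal.inv_pow, ← div_eq_mul_inv]
        exact ENNReal.div_le_div (le_iSup (fun i => ∑' a : s, v i a) j) (hmass j)
    _ = 2 * ⨆ j, ∑' a : s, v j a := by
        rw [ENNReal.tsum_mul_left, ENNReal.tsum_geometric, ENNReal.one_sub_inv_two, inv_inv,
          mul_comm]

end NormalizedSum

/-- For every density submeasure `φ = sup_n μ_n` on `ω` with `φ(ω) = ∞`, the ideal
`Exh(φ)` is contained in a summable ideal: there is `f : ω → [0,∞)` with `Σ_n f(n) = ∞`
and `Σ_{n∈A} f(n) < ∞` for every `A ∈ Exh(φ)`. -/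
theorem stmt_14 (w : ℕ → ℕ → ℝ≥0∞)
    (hfin : ∀ n k, w n k ≠ ⊤)
    (hsupfin : ∀ n, (Function.support (w n)).Finite)
    (hdisj : ∀ m n, m ≠ n → Function.support (w m) ∩ Function.support (w n) = ∅)
    (φ : Set ℕ → ℝ≥0∞) (hφ : ∀ A : Set ℕ, φ A = ⨆ n, ∑' k : A, w n k)
    (hinf : φ Set.univ = ⊤) :
    ∃ f : ℕ → ℝ, (∀ n, 0 ≤ f n) ∧ ¬ Summable f ∧
      ∀ A : Set ℕ, ExhMem φ A → Summable (A.indicator f) := by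
  obtain ⟨m, hm⟩ : ∃ m : ℕ → ℕ, ∀ j, 2 ^ j < ∑' k, w (m j) k := by
    have htop : ⨆ n, ∑' k, w n k = ⊤ := by simpa only [hφ, tsum_univ] using hinf
    choose m hm using fun j : ℕ =>
      iSup_eq_top.1 htop (2 ^ j) (ENNReal.pow_lt_top ENNReal.ofNat_lt_top)
    exact ⟨m, hm⟩
  set g := normalizedSum fun j => w (m j)
  have hbound : ∀ s : Set ℕ, ∑' k : s, g k ≤ 2 * φ s := fun s =>
    (tsum_subtype_normalizedSum_le (fun j => (hm j).le) s).trans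
      (mul_le_mul_right ((hφ s).symm ▸ iSup_comp_le (fun n => ∑' k : s, w n k) m) 2)
  have hg : ∀ k, g k ≠ ⊤ := by
    intro k
    have hk : φ {k} ≠ ⊤ := by
      simpa only [hφ, tsum_singleton] using iSup_ne_top_of_pairwise_disjoint_support hfin
        (fun i j hij => disjoint_iff_inter_eq_empty.2 (hdisj i j hij)) k
    simpa only [tsum_singleton] using
      ne_top_of_le_ne_top (ENNReal.mul_ne_top ENNReal.ofNat_ne_top hk) (hbound {k})
  refine ⟨fun k => (g k).toReal, fun k => ENNReal.toReal_nonneg, ?_, fun A hA => ?_⟩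
  · rw [summable_toReal_iff_tsum_ne_top hg, not_ne_iff]
    exact tsum_normalizedSum_eq_top _ (fun j => (zero_le.trans_lt (hm j)).ne')
      (fun j => tsum_ne_top_of_finite_support (hfin _) (hsupfin _))
  · obtain ⟨M, hM⟩ : ∃ M, φ (A \ Iic M) < ⊤ :=
      (hA.eventually (gt_mem_nhds ENNReal.zero_lt_top)).exists
    rw [← summable_subtype_iff_indicator]
    exact ENNReal.summable_toReal (tsum_subtype_ne_top_of_diff_Iic hg M
      (ne_top_of_le_ne_top (ENNReal.mul_ne_top ENNReal.ofNat_ne_top hM.ne) (hbound _)))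
end

section
/- Every ideal I on ω with the Positive Summability Property is tall: for every infinite A ⊆ ω there is an infinite B ∈ I with B ⊆ A. -/
theorem summable_indicator_one_iff_finite {α : Type*} {s : Set α} :
    Summable (s.indicator (1 : α → ℝ)) ↔ s.Finite := by
  rw [← summable_subtype_iff_indicator, ← Set.finite_coe_iff]
  exact ⟨fun h => Finite.of_summable_const one_pos h, fun _ => Summable.of_finite⟩

/-- Every ideal on `ω` with the Positive Summability Property is tall: every infinite
`A ⊆ ω` contains an infinite member of `I`. -/
theorem stmt_16 (I : Set (Set ℕ)) (hI : IsIdeal I)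
    (hPSP : ∀ x : ℕ → ℝ, (∀ n, 0 ≤ x n) →
      (∀ A ∈ I, Summable (Set.indicator A x)) → Summable x) :
    ∀ A : Set ℕ, A.Infinite → ∃ B ∈ I, B.Infinite ∧ B ⊆ A := by
  intro A hA
  obtain ⟨B, hBI, hB⟩ : ∃ B ∈ I, ¬ Summable (B.indicator (A.indicator 1)) := by
    by_contra! h
    exact hA (summable_indicator_one_iff_finite.mp
      (hPSP _ (Set.indicator_nonneg fun _ _ => zero_le_one) h))
  rw [Set.indicator_indicator, summable_indicator_one_iff_finite] at hB
  exact ⟨B ∩ A, hI.2.1 hBI Set.inter_subset_left, hB, Set.inter_subset_right⟩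
end

section
/- An ideal I on ω has the Positive Summability Property if and only if it has the Absolute Summability Property: for every sequence (x_n) of reals, if the series Σ_{n∈A} x_n converges for every A ∈ I, then Σ_n |x_n| < ∞. -/
/-!
Splitting `x = x⁺ - x⁻`: the subseries of `x` over `A ∩ {n | 0 ≤ x n}` is a series of
non-negative terms, so its convergence is summability of `A.indicator x⁺`. An ideal is closed
under subsets, so convergence of `Σ_{n∈A} x_n` for all `A ∈ I` gives, through the Positive
Summability Property, summability of `x⁺` and (applied to `-x`) of `x⁻`, hence of `|x| = x⁺ + x⁻`.
The converse is immediate, since for non-negative terms `|x| = x`.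
-/

open Filter

/-- The series `Σ_{n∈A} x_n` converges (in the sense of partial sums). -/
def SeriesConvOn (A : Set ℕ) (x : ℕ → ℝ) : Prop :=
  ∃ L : ℝ, Tendsto (fun N => ∑ n ∈ Finset.range N, Set.indicator A x n) atTop (nhds L)

def HasPositiveSummability (I : Set (Set ℕ)) : Prop :=
  ∀ x : ℕ → ℝ, (∀ n, 0 ≤ x n) → (∀ A ∈ I, Summable (A.indicator x)) → Summable x

def HasAbsoluteSummability (I : Set (Set ℕ)) : Prop :=
  ∀ x : ℕ → ℝ, (∀ A ∈ I, SeriesConvOn A x) → Summable (fun n => |x n|)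

lemma Set.indicator_posPart_eq_indicator_inter {α : Type*} (A : Set α) (x : α → ℝ) :
    A.indicator x⁺ = (A ∩ {n | 0 ≤ x n}).indicator x := by
  ext n
  by_cases hA : n ∈ A
  · by_cases hn : 0 ≤ x n
    · simp [hA, hn]
    · simp [hA, hn, posPart_eq_zero.mpr (not_le.mp hn).le]
  · simp [hA]

namespace SeriesConvOn

variable {A : Set ℕ} {x : ℕ → ℝ}

lemma neg (h : SeriesConvOn A x) : SeriesConvOn A (-x) := by
  obtain ⟨L, hL⟩ := h
  exact ⟨-L, by simpa only [Set.indicator_neg', Pi.neg_apply, Finset.sum_neg_distrib] using hL.neg⟩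

lemma summable_indicator (h : SeriesConvOn A x) (hx : ∀ n ∈ A, 0 ≤ x n) :
    Summable (A.indicator x) := by
  obtain ⟨L, hL⟩ := h
  exact ((hasSum_iff_tendsto_nat_of_nonneg (Set.indicator_nonneg hx) L).mpr hL).summable

end SeriesConvOn

namespace IsIdeal

variable {I : Set (Set ℕ)}

lemma summable_posPart (hI : IsIdeal I) (hP : HasPositiveSummability I) {x : ℕ → ℝ}
    (hx : ∀ A ∈ I, SeriesConvOn A x) : Summable x⁺ :=
  hP x⁺ (fun n => posPart_nonneg (x n)) fun A hA => by
    rw [Set.indicator_posPart_eq_indicator_inter]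
    exact (hx _ (hI.2.1 hA Set.inter_subset_left)).summable_indicator fun n hn => hn.2

lemma hasAbsoluteSummability (hI : IsIdeal I) (hP : HasPositiveSummability I) :
    HasAbsoluteSummability I := fun x hx => by
  have hpos : Summable x⁺ := hI.summable_posPart hP hx
  have hneg : Summable x⁻ := by
    rw [← posPart_neg]
    exact hI.summable_posPart hP fun A hA => (hx A hA).neg
  have habs : Summable (x⁺ + x⁻) := hpos.add hneg
  rwa [posPart_add_negPart] at habs

end IsIdeal

lemma HasAbsoluteSummability.hasPositiveSummability {I : Set (Set ℕ)}
    (h : HasAbsoluteSummability I) : HasPositiveSummability I := fun x hx hsum =>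
  (h x fun A hA => ⟨_, (hsum A hA).hasSum.tendsto_sum_nat⟩).congr fun n => abs_of_nonneg (hx n)

/-- An ideal on `ω` has the Positive Summability Property if and only if it has the
Absolute Summability Property. -/
theorem stmt_17 (I : Set (Set ℕ)) (hI : IsIdeal I) :
    (∀ x : ℕ → ℝ, (∀ n, 0 ≤ x n) →
        (∀ A ∈ I, Summable (Set.indicator A x)) → Summable x) ↔
    (∀ x : ℕ → ℝ, (∀ A ∈ I, SeriesConvOn A x) → Summable (fun n => |x n|)) :=
  ⟨hI.hasAbsoluteSummability, HasAbsoluteSummability.hasPositiveSummability⟩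
end
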